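/- Let r ≤ n-3 and let A be a rank-r matrix in L(C_n). Then rank(A) = r implies A has exactly n-r blocks of deficient rank after a suitable dihedral rotation: there exists σ ∈ D_n such that σ(A) is in block form of type T=(t_1,...,t_{n-r}) with t_1+...+t_{n-r} = n and each block of rank t_i − 1. -/
import Mathlib


/-- Membership in the cyclic linear space `L(Cₙ)`. -/
def cyclicBand {n : ℕ} (A : Matrix (Fin n) (Fin n) ℂ) : Prop :=
  A.IsSymm ∧ ∀ i j : Fin n, 1 < ((i : ℤ) - (j : ℤ)).natAbs →
    ((i : ℤ) - (j : ℤ)).natAbs < n - 1 → A i j = 0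

/-- `σ` is in the dihedral group `Dₙ`: a rotation or a reflection of `Fin n`. -/
def isDihedral {n : ℕ} (σ : Equiv.Perm (Fin n)) : Prop :=
  ∃ c : Fin n, (∀ i, σ i = i + c) ∨ (∀ i, σ i = c - i)

/-- Block form of type `T = (t₁,…,t_k)` with `t_j = z j - z (j-1)`, breakpoints
`0 = z 0 < ⋯ < z k = n`: the off-diagonal entries across block boundaries vanish
(including `b_n = A (n-1) 0`), and each block has rank its size minus one. -/
def blockForm {n : ℕ} [NeZero n] (A : Matrix (Fin n) (Fin n) ℂ)
    (k : ℕ) (z : Fin (k + 1) → ℕ) : Prop :=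
  StrictMono z ∧ z 0 = 0 ∧ z (Fin.last k) = n ∧
    (∀ j : Fin k,
      A ⟨(z j.succ - 1) % n, Nat.mod_lt _ (Nat.pos_of_neZero n)⟩
        ⟨z j.succ % n, Nat.mod_lt _ (Nat.pos_of_neZero n)⟩ = 0) ∧
    (∀ j : Fin k,
      (A.submatrix
          (fun x : {i : Fin n // z j.castSucc ≤ (i : ℕ) ∧ (i : ℕ) < z j.succ} => (x : Fin n))
          (fun x : {i : Fin n // z j.castSucc ≤ (i : ℕ) ∧ (i : ℕ) < z j.succ} => (x : Fin n))).rank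
        = (z j.succ - z j.castSucc) - 1)



open Matrix

section RankTools
variable {l l' m o p q : Type*}

lemma rank_submatrix_le'' [Fintype l] [Fintype l'] [Fintype m] [Fintype o]
    [DecidableEq m] [DecidableEq o] (A : Matrix m o ℂ) (f : l → m) (g : l' → o) :
    (A.submatrix f g).rank ≤ A.rank := by
  have h : A.submatrix f g =
      ((1 : Matrix m m ℂ).submatrix f id) * A * ((1 : Matrix o o ℂ).submatrix id g) := by
    ext i j
    simp [Matrix.mul_apply, Matrix.one_apply, Finset.sum_ite_eq, Finset.sum_ite_eq']
  rw [h]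
  exact le_trans (Matrix.rank_mul_le_left _ _) (Matrix.rank_mul_le_right _ _)

noncomputable def subProdEquiv {K V W : Type*} [Field K] [AddCommGroup V] [AddCommGroup W]
    [Module K V] [Module K W] (P : Submodule K V) (Q : Submodule K W) :
    (P.prod Q) ≃ₗ[K] P × Q where
  toFun x := (⟨x.1.1, x.2.1⟩, ⟨x.1.2, x.2.2⟩)
  map_add' x y := rfl
  map_smul' c x := rfl
  invFun y := ⟨(y.1.1, y.2.1), ⟨y.1.2, y.2.2⟩⟩
  left_inv x := rfl
  right_inv y := rfl

lemma rank_fromBlocks_zero [Fintype p] [Fintype q] [DecidableEq p] [DecidableEq q]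
    (B : Matrix p p ℂ) (C : Matrix q q ℂ) :
    (Matrix.fromBlocks B 0 0 C).rank = B.rank + C.rank := by
  classical
  set e := LinearEquiv.sumArrowLequivProdArrow p q ℂ ℂ with he
  have hcomp : (Matrix.fromBlocks B 0 0 C).mulVecLin =
      (e.symm.toLinearMap ∘ₗ (B.mulVecLin.prodMap C.mulVecLin)) ∘ₗ e.toLinearMap := by
    apply LinearMap.ext
    intro v
    simp only [Matrix.mulVecLin_apply, LinearMap.comp_apply, LinearEquiv.coe_coe]
    rw [Matrix.fromBlocks_mulVec]
    simp only [he, LinearEquiv.sumArrowLequivProdArrow, Matrix.zero_mulVec, add_zero, zero_add,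
      LinearEquiv.coe_mk, Equiv.sumArrowEquivProdArrow]
    rfl
  have hrange : LinearMap.range (B.mulVecLin.prodMap C.mulVecLin) =
      (LinearMap.range B.mulVecLin).prod (LinearMap.range C.mulVecLin) := by
    ext ⟨x, y⟩
    constructor
    · rintro ⟨⟨a, b⟩, h⟩
      obtain ⟨h1, h2⟩ := Prod.mk.injEq .. ▸ h
      exact ⟨⟨a, h1⟩, ⟨b, h2⟩⟩
    · rintro ⟨⟨a, ha⟩, ⟨b, hb⟩⟩
      exact ⟨(a, b), by simp [LinearMap.prodMap_apply, ha, hb]⟩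
  rw [Matrix.rank, Matrix.rank, Matrix.rank, hcomp]
  rw [LinearMap.range_comp_of_range_eq_top _ (LinearEquiv.range e)]
  rw [LinearMap.range_comp, LinearEquiv.finrank_map_eq, hrange]
  rw [(subProdEquiv _ _).finrank_eq, Module.finrank_prod]
lemma rank_split {ι : Type*} [Fintype ι] [DecidableEq ι] (M : Matrix ι ι ℂ)
    (P : ι → Prop) [DecidablePred P]
    (h : ∀ i j, P i → ¬ P j → M i j = 0) (h' : ∀ i j, ¬ P i → P j → M i j = 0) :
    M.rank = (M.submatrix (fun x : {i // P i} => (x : ι)) (fun x : {i // P i} => (x : ι))).rank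
      + (M.submatrix (fun x : {i // ¬ P i} => (x : ι)) (fun x : {i // ¬ P i} => (x : ι))).rank := by
  classical
  set e := Equiv.sumCompl P with he
  have hsub : M.submatrix e e = Matrix.fromBlocks
      (M.submatrix (fun x : {i // P i} => (x : ι)) (fun x : {i // P i} => (x : ι)))
      0 0
      (M.submatrix (fun x : {i // ¬ P i} => (x : ι)) (fun x : {i // ¬ P i} => (x : ι))) := by
    ext i j
    cases i with
    | inl i => cases j with
      | inl j => simp [he, Equiv.sumCompl]
      | inr j => simp [he, Equiv.sumCompl, h i j i.2 j.2]
    | inr i => cases j with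
      | inl j => simp [he, Equiv.sumCompl, h' i j i.2 j.2]
      | inr j => simp [he, Equiv.sumCompl]
  rw [← Matrix.rank_submatrix M e e, hsub, rank_fromBlocks_zero]

end RankTools

section Blocks
variable {n : ℕ}

/-- The principal submatrix on indices in `[a, b)`. -/
noncomputable def Blk (M : Matrix (Fin n) (Fin n) ℂ) (a b : ℕ) :
    Matrix {i : Fin n // a ≤ (i : ℕ) ∧ (i : ℕ) < b} {i : Fin n // a ≤ (i : ℕ) ∧ (i : ℕ) < b} ℂ :=
  M.submatrix (fun x => (x : Fin n)) (fun x => (x : Fin n))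

def blkEquiv {a b : ℕ} (hab : a ≤ b) (hbn : b ≤ n) :
    {i : Fin n // a ≤ (i : ℕ) ∧ (i : ℕ) < b} ≃ Fin (b - a) where
  toFun x := ⟨(x : ℕ) - a, by omega⟩
  invFun k := ⟨⟨a + (k : ℕ), by omega⟩, by constructor <;> simp <;> omega⟩
  left_inv x := by
    obtain ⟨⟨x, hx⟩, h1, h2⟩ := x
    have h1' : a ≤ x := h1
    have h2' : x < b := h2
    apply Subtype.ext
    apply Fin.ext
    show a + (x - a) = x
    omega
  right_inv k := by
    obtain ⟨k, hk⟩ := k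
    simp only [Fin.mk.injEq]
    omega

lemma blk_card {a b : ℕ} (hab : a ≤ b) (hbn : b ≤ n) :
    Fintype.card {i : Fin n // a ≤ (i : ℕ) ∧ (i : ℕ) < b} = b - a := by
  rw [Fintype.card_congr (blkEquiv hab hbn), Fintype.card_fin]

lemma blk_rank_le (M : Matrix (Fin n) (Fin n) ℂ) {a b : ℕ} (hab : a ≤ b) (hbn : b ≤ n) :
    (Blk M a b).rank ≤ b - a :=
  (Matrix.rank_le_card_width _).trans (blk_card hab hbn).le

lemma blk_split (M : Matrix (Fin n) (Fin n) ℂ)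
    (Hsym : ∀ i j, M i j = M j i) (Htri : ∀ i j : Fin n, (i : ℕ) + 1 < (j : ℕ) → M i j = 0)
    {a m b : ℕ} (ham : a ≤ m) (hmb : m ≤ b) (hbn : b ≤ n)
    (hm0 : 0 < m) (hmn : m < n)
    (hzero : M ⟨m - 1, by omega⟩ ⟨m, hmn⟩ = 0) :
    (Blk M a b).rank = (Blk M a m).rank + (Blk M m b).rank := by
  classical
  have key : ∀ i j : Fin n, (i : ℕ) < m → m ≤ (j : ℕ) → M i j = 0 := by
    intro i j hi hj
    rcases lt_or_ge ((i : ℕ) + 1) (j : ℕ) with h | h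
    · exact Htri i j h
    · have hji : (j : ℕ) = m ∧ (i : ℕ) = m - 1 := by omega
      have hi' : i = ⟨m - 1, by omega⟩ := Fin.ext hji.2
      have hj' : j = ⟨m, hmn⟩ := Fin.ext hji.1
      exact (congrArg₂ M hi' hj').trans hzero
  have hmain := rank_split (Blk M a b) (fun x => ((x : Fin n) : ℕ) < m)
    (fun i j hi hj => key i j hi (by omega))
    (fun i j hi hj => (Hsym _ _).trans (key j i hj (by omega)))
  rw [hmain]
  congr 1
  · let E : {i : Fin n // a ≤ (i : ℕ) ∧ (i : ℕ) < m}
        ≃ {x : {i : Fin n // a ≤ (i : ℕ) ∧ (i : ℕ) < b} // ((x : Fin n) : ℕ) < m} :=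
      { toFun := fun x => ⟨⟨x.1, x.2.1, lt_of_lt_of_le x.2.2 hmb⟩, x.2.2⟩
        invFun := fun y => ⟨y.1.1, y.1.2.1, y.2⟩
        left_inv := fun x => rfl
        right_inv := fun y => rfl }
    rw [← Matrix.rank_submatrix _ E E]
    rfl
  · let E : {i : Fin n // m ≤ (i : ℕ) ∧ (i : ℕ) < b}
        ≃ {x : {i : Fin n // a ≤ (i : ℕ) ∧ (i : ℕ) < b} // ¬ ((x : Fin n) : ℕ) < m} :=
      { toFun := fun x => ⟨⟨x.1, le_trans ham x.2.1, x.2.2⟩, not_lt.2 x.2.1⟩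
        invFun := fun y => ⟨y.1.1, not_lt.1 y.2, y.1.2.2⟩
        left_inv := fun x => rfl
        right_inv := fun y => rfl }
    rw [← Matrix.rank_submatrix _ E E]
    rfl

lemma blk_irred (M : Matrix (Fin n) (Fin n) ℂ) {a b : ℕ} (hab : a ≤ b) (hbn : b ≤ n)
    (Htri : ∀ i j : Fin n, a ≤ (i : ℕ) → (j : ℕ) < b → (i : ℕ) + 1 < (j : ℕ) → M i j = 0)
    (hcoup : ∀ i : ℕ, a ≤ i → ∀ h2 : i + 1 < b,
      M ⟨i, lt_of_lt_of_le (Nat.lt_of_succ_lt h2) hbn⟩ ⟨i + 1, lt_of_lt_of_le h2 hbn⟩ ≠ 0) :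
    b - a - 1 ≤ (Blk M a b).rank := by
  rcases le_or_gt (b - a) 1 with h | h
  · omega
  set t' := b - a - 1 with ht'
  have hb : ∀ i : Fin t', a + (i : ℕ) + 1 < b := by intro i; omega
  set N : Matrix (Fin t') (Fin t') ℂ :=
    M.submatrix (fun i => ⟨a + (i : ℕ), by have := hb i; omega⟩)
      (fun i => ⟨a + (i : ℕ) + 1, by have := hb i; omega⟩) with hN
  have htriangular : N.BlockTriangular OrderDual.toDual := by
    intro i j hij
    have hij' : (i : ℕ) < (j : ℕ) := hij
    exact Htri _ _ (by simp) (by have := hb j; simp; omega) (by simp; omega)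
  have hdet : N.det ≠ 0 := by
    rw [Matrix.det_of_lowerTriangular N htriangular]
    refine Finset.prod_ne_zero_iff.2 fun i _ => ?_
    exact hcoup (a + (i : ℕ)) (by omega) (by have := hb i; omega)
  have hrankN : N.rank = t' := by
    rw [Matrix.rank_of_isUnit N ((Matrix.isUnit_iff_isUnit_det N).2 (Ne.isUnit hdet)),
      Fintype.card_fin]
  have hsub : N = (Blk M a b).submatrix
      (fun i : Fin t' => (⟨⟨a + (i : ℕ), by have := hb i; omega⟩, by simp; omega⟩ :
        {i : Fin n // a ≤ (i : ℕ) ∧ (i : ℕ) < b}))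
      (fun i : Fin t' => (⟨⟨a + (i : ℕ) + 1, by have := hb i; omega⟩, by simp; omega⟩ :
        {i : Fin n // a ≤ (i : ℕ) ∧ (i : ℕ) < b})) := rfl
  calc t' = N.rank := hrankN.symm
    _ ≤ (Blk M a b).rank := by rw [hsub]; exact rank_submatrix_le'' _ _ _

end Blocks

section Induction
variable {n : ℕ}

lemma exists_deficient_prefix (M : Matrix (Fin n) (Fin n) ℂ)
    (Hsym : ∀ i j, M i j = M j i) (Htri : ∀ i j : Fin n, (i : ℕ) + 1 < (j : ℕ) → M i j = 0)
    (s a ρ : ℕ) (hs : n = a + s) (hρ : (Blk M a n).rank = ρ) (hρs : ρ + 2 ≤ s) :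
    ∃ m, a ≤ m ∧ ∃ h2 : m + 1 < n,
      M ⟨m, Nat.lt_of_succ_lt h2⟩ ⟨m + 1, h2⟩ = 0 ∧ (Blk M a (m + 1)).rank = m - a := by
  classical
  induction s using Nat.strong_induction_on generalizing a ρ with
  | _ s IH =>
  have hn0 : 0 < n := by omega
  have modconv : ∀ (m : ℕ) (h2 : m + 1 < n),
      M ⟨m % n, Nat.mod_lt _ hn0⟩ ⟨(m + 1) % n, Nat.mod_lt _ hn0⟩
        = M ⟨m, Nat.lt_of_succ_lt h2⟩ ⟨m + 1, h2⟩ := by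
    intro m h2
    exact congrArg₂ M (Fin.ext (Nat.mod_eq_of_lt (Nat.lt_of_succ_lt h2)))
      (Fin.ext (Nat.mod_eq_of_lt h2))
  set Q : ℕ → Prop := fun m => a ≤ m ∧ m + 1 < n ∧
    M ⟨m % n, Nat.mod_lt _ hn0⟩ ⟨(m + 1) % n, Nat.mod_lt _ hn0⟩ = 0 with hQdef
  have hexQ : ∃ m, Q m := by
    by_contra hno
    push_neg at hno
    have hcoup : ∀ i : ℕ, a ≤ i → ∀ h2 : i + 1 < n,
        M ⟨i, lt_of_lt_of_le (Nat.lt_of_succ_lt h2) (le_refl n)⟩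
          ⟨i + 1, lt_of_lt_of_le h2 (le_refl n)⟩ ≠ 0 := by
      intro i hai h2 heq
      exact hno i ⟨hai, h2, by rw [modconv i h2]; exact heq⟩
    have hirr := blk_irred M (by omega : a ≤ n) (le_refl n)
      (fun i j _ _ hij => Htri i j hij) hcoup
    omega
  set m0 := Nat.find hexQ with hm0def
  obtain ⟨ham0, hm0n, hzero0⟩ := Nat.find_spec hexQ
  have hzero0' : M ⟨m0, Nat.lt_of_succ_lt hm0n⟩ ⟨m0 + 1, hm0n⟩ = 0 := by
    rw [← modconv m0 hm0n]; exact hzero0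
  -- the prefix block [a, m0+1) is irreducible
  have hirr : m0 + 1 - a - 1 ≤ (Blk M a (m0 + 1)).rank := by
    apply blk_irred M (by omega : a ≤ m0 + 1) (by omega : m0 + 1 ≤ n)
      (fun i j _ _ hij => Htri i j hij)
    intro i hai h2 heq
    have : ¬ Q i := Nat.find_min hexQ (by omega)
    exact this ⟨hai, by omega, by rw [modconv i (by omega)]; exact heq⟩
  have hub : (Blk M a (m0 + 1)).rank ≤ m0 + 1 - a := blk_rank_le M (by omega) (by omega)
  have hsplit : (Blk M a n).rank = (Blk M a (m0 + 1)).rank + (Blk M (m0 + 1) n).rank := by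
    apply blk_split M Hsym Htri (by omega) (by omega) (le_refl n) (by omega) hm0n
    exact hzero0'
  rcases eq_or_lt_of_le hirr with hdef | hfull
  · exact ⟨m0, ham0, hm0n, hzero0', by omega⟩
  · -- prefix has full rank m0 + 1 - a; recurse on [m0 + 1, n)
    have hrkB : (Blk M a (m0 + 1)).rank = m0 + 1 - a := by omega
    obtain ⟨m, ham, h2, hz, hrk⟩ := IH (n - (m0 + 1)) (by omega) (m0 + 1)
      ((Blk M (m0 + 1) n).rank) (by omega) rfl (by omega)
    refine ⟨m, by omega, h2, hz, ?_⟩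
    have hsplit2 : (Blk M a (m + 1)).rank
        = (Blk M a (m0 + 1)).rank + (Blk M (m0 + 1) (m + 1)).rank := by
      apply blk_split M Hsym Htri (by omega) (by omega) (by omega) (by omega) hm0n
      exact hzero0'
    rw [hsplit2, hrkB, hrk]
    omega

end Induction

set_option maxHeartbeats 1000000 in
lemma build_blocks {n : ℕ} (M : Matrix (Fin n) (Fin n) ℂ)
    (Hsym : ∀ i j, M i j = M j i) (Htri : ∀ i j : Fin n, (i : ℕ) + 1 < (j : ℕ) → M i j = 0)
    (s a ρ : ℕ) (hs : n = a + s) (hρ : (Blk M a n).rank = ρ) (hρs : ρ + 1 ≤ s) :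
    ∃ z : Fin (s - ρ + 1) → ℕ, StrictMono z ∧ z 0 = a ∧ z (Fin.last _) = n ∧
      (∀ j : Fin (s - ρ), ∀ h : z j.succ < n,
        M ⟨z j.succ - 1, lt_of_le_of_lt (Nat.sub_le _ _) h⟩ ⟨z j.succ, h⟩ = 0) ∧
      (∀ j : Fin (s - ρ),
        (Blk M (z j.castSucc) (z j.succ)).rank = (z j.succ - z j.castSucc) - 1) := by
  classical
  induction s using Nat.strong_induction_on generalizing a ρ with
  | _ s IH =>
  by_cases hcase : ρ + 2 ≤ s
  · -- recursive case: find a deficient prefix and recurse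
    obtain ⟨m, ham, h2, hz, hrk⟩ :=
      exists_deficient_prefix M Hsym Htri s a ρ hs hρ hcase
    have hsplit : (Blk M a n).rank = (Blk M a (m + 1)).rank + (Blk M (m + 1) n).rank := by
      apply blk_split M Hsym Htri (by omega) (by omega) (le_refl n) (by omega) h2
      exact hz
    set ρ' := (Blk M (m + 1) n).rank with hρ'def
    set s' := n - (m + 1) with hs'def
    have hρρ' : ρ = (m - a) + ρ' := by omega
    obtain ⟨z', hmono', h0', hlast', hb', hr'⟩ :=
      IH s' (by omega) (m + 1) ρ' (by omega) rfl (by omega)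
    have hk : s - ρ = (s' - ρ') + 1 := by omega
    have hvlt : ∀ i : Fin (s - ρ + 1), (i : ℕ) ≠ 0 → (i : ℕ) - 1 < s' - ρ' + 1 := by
      intro i hi
      have := i.isLt
      omega
    set z : Fin (s - ρ + 1) → ℕ :=
      fun i => if h : (i : ℕ) = 0 then a else z' ⟨(i : ℕ) - 1, hvlt i h⟩ with hzdef
    have zpos : z 0 = a := dif_pos (Fin.val_zero _)
    have zneg : ∀ (i : Fin (s - ρ + 1)) (hi : (i : ℕ) ≠ 0), z i = z' ⟨(i : ℕ) - 1, hvlt i hi⟩ :=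
      fun i hi => dif_neg hi
    have zsucc : ∀ j : Fin (s - ρ), z j.succ = z' ⟨(j : ℕ), by have := j.isLt; omega⟩ := by
      intro j
      rw [zneg j.succ (by simp)]
      exact congrArg z' (Fin.ext (by simp [Fin.val_succ]))
    refine ⟨z, ?_, zpos, ?_, ?_, ?_⟩
    · rw [Fin.strictMono_iff_lt_succ]
      intro i
      rw [zsucc i]
      by_cases hi : (i.castSucc : ℕ) = 0
      · have hc0 : i.castSucc = (0 : Fin (s - ρ + 1)) := Fin.ext (by simpa using hi)
        rw [hc0, zpos]
        have hieq : z' ⟨(i : ℕ), by have := i.isLt; omega⟩ = z' 0 :=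
          congrArg z' (Fin.ext (by simpa using hi))
        rw [hieq, h0']
        omega
      · rw [zneg i.castSucc hi]
        apply hmono'
        rw [Fin.mk_lt_mk]
        have hi' : (i : ℕ) ≠ 0 := by simpa using hi
        simp only [Fin.coe_castSucc]
        omega
    · rw [zneg (Fin.last _) (by simp [Fin.val_last]; omega)]
      have hle : (⟨((Fin.last (s - ρ) : Fin (s - ρ + 1)) : ℕ) - 1,
            hvlt _ (by simp [Fin.val_last]; omega)⟩ : Fin (s' - ρ' + 1))
          = Fin.last (s' - ρ') := Fin.ext (by simp [Fin.val_last]; omega)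
      rw [hle, hlast']
    · intro j
      by_cases hj : (j : ℕ) = 0
      · have e : z j.succ = m + 1 := by
          rw [zsucc j]
          have hj0 : (⟨(j : ℕ), by have := j.isLt; omega⟩ : Fin (s' - ρ' + 1)) = 0 :=
            Fin.ext (by simpa using hj)
          rw [hj0, h0']
        rw [e]
        intro h
        exact hz
      · have e : z j.succ = z' (⟨(j : ℕ) - 1, by have := j.isLt; omega⟩ : Fin (s' - ρ')).succ := by
          rw [zsucc j]
          congr 1
          apply Fin.ext
          simp only [Fin.val_succ]
          omega
        rw [e]
        intro h
        exact hb' _ h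
    · intro j
      by_cases hj : (j : ℕ) = 0
      · have ecast : z j.castSucc = a := by
          have hc0 : j.castSucc = (0 : Fin (s - ρ + 1)) := Fin.ext (by simpa using hj)
          rw [hc0, zpos]
        have esucc : z j.succ = m + 1 := by
          rw [zsucc j]
          have hj0 : (⟨(j : ℕ), by have := j.isLt; omega⟩ : Fin (s' - ρ' + 1)) = 0 :=
            Fin.ext (by simpa using hj)
          rw [hj0, h0']
        rw [ecast, esucc, hrk]
        omega
      · have ecast : z j.castSucc
            = z' (⟨(j : ℕ) - 1, by have := j.isLt; omega⟩ : Fin (s' - ρ')).castSucc := by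
          rw [zneg j.castSucc (by simpa using hj)]
          exact congrArg z' (Fin.ext (by simp [Fin.coe_castSucc]))
        have esucc : z j.succ
            = z' (⟨(j : ℕ) - 1, by have := j.isLt; omega⟩ : Fin (s' - ρ')).succ := by
          rw [zsucc j]
          exact congrArg z' (Fin.ext (by simp only [Fin.val_succ]; omega))
        rw [ecast, esucc]
        exact hr' _
  · -- base case: a single block, s = ρ + 1
    have hsρ : s = ρ + 1 := by omega
    set z : Fin (s - ρ + 1) → ℕ := fun i => if (i : ℕ) = 0 then a else n with hzdef
    have zpos : ∀ (i : Fin (s - ρ + 1)), (i : ℕ) = 0 → z i = a := fun i hi => if_pos hi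
    have zneg : ∀ (i : Fin (s - ρ + 1)), (i : ℕ) ≠ 0 → z i = n := fun i hi => if_neg hi
    refine ⟨z, ?_, zpos 0 (Fin.val_zero _), zneg _ (by simp [Fin.val_last]; omega), ?_, ?_⟩
    · rw [Fin.strictMono_iff_lt_succ]
      intro i
      have hi : (i : ℕ) = 0 := by have := i.isLt; omega
      rw [zpos i.castSucc (by simpa using hi), zneg i.succ (by simp)]
      omega
    · intro j h
      exfalso
      rw [zneg j.succ (by simp)] at h
      omega
    · intro j
      have hj : (j : ℕ) = 0 := by have := j.isLt; omega
      rw [zpos j.castSucc (by simpa using hj), zneg j.succ (by simp), hρ]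
      omega

/-- a matrix `A ∈ L(Cₙ)` of rank `r ≤ n - 3` can be brought, by a suitable
dihedral symmetry, into block form of type `T = (t₁,…,t_{n-r})` with `t₁ + ⋯ + t_{n-r} = n`
and each block of rank `tᵢ - 1`. -/
theorem stmt_12 {n r : ℕ} [NeZero n] (hr : r + 3 ≤ n) (A : Matrix (Fin n) (Fin n) ℂ)
    (hA : cyclicBand A) (hrank : A.rank = r) :
    ∃ σ : Equiv.Perm (Fin n), isDihedral σ ∧
      ∃ z : Fin (n - r + 1) → ℕ, blockForm (A.submatrix σ σ) (n - r) z := by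
  classical
  have hn0 : 0 < n := by omega
  obtain ⟨hsymm, hband⟩ := hA
  have Hsym : ∀ i j, A i j = A j i := fun i j => congrFun (congrFun hsymm j) i
  have modchar : ∀ x : ℕ, x < n + n → (x % n = x ∧ x < n) ∨ (x % n = x - n ∧ n ≤ x) := by
    intro x hx
    rcases lt_or_ge x n with h | h
    · exact Or.inl ⟨Nat.mod_eq_of_lt h, h⟩
    · refine Or.inr ⟨?_, h⟩
      rw [Nat.mod_eq_sub_mod h, Nat.mod_eq_of_lt (by omega)]
  -- find a zero coupling of `A` strictly inside `[1, n)`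
  have hex : ∃ i : ℕ, 1 ≤ i ∧ i + 1 < n ∧
      A ⟨i % n, Nat.mod_lt _ hn0⟩ ⟨(i + 1) % n, Nat.mod_lt _ hn0⟩ = 0 := by
    by_contra hno
    push_neg at hno
    have hcoup : ∀ i : ℕ, 1 ≤ i → ∀ h2 : i + 1 < n,
        A ⟨i, lt_of_lt_of_le (Nat.lt_of_succ_lt h2) (le_refl n)⟩
          ⟨i + 1, lt_of_lt_of_le h2 (le_refl n)⟩ ≠ 0 := by
      intro i h1 h2 heq
      refine hno i h1 h2 ?_
      exact (congrArg₂ A (Fin.ext (Nat.mod_eq_of_lt (by omega)))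
        (Fin.ext (Nat.mod_eq_of_lt h2))).trans heq
    have hirr := blk_irred A (show (1 : ℕ) ≤ n by omega) (le_refl n)
      (fun i j h1 h2 h3 => hband i j (by omega) (by omega)) hcoup
    have hle : (Blk A 1 n).rank ≤ A.rank := rank_submatrix_le'' A _ _
    omega
  obtain ⟨m0, hm01, hm0n, hA0'⟩ := hex
  have hA0 : A ⟨m0, Nat.lt_of_succ_lt hm0n⟩ ⟨m0 + 1, hm0n⟩ = 0 :=
    ((congrArg₂ A (Fin.ext (Nat.mod_eq_of_lt (by omega)))
      (Fin.ext (Nat.mod_eq_of_lt hm0n))).symm).trans hA0'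
  set c : Fin n := ⟨m0 + 1, hm0n⟩ with hcdef
  have hc : (c : ℕ) = m0 + 1 := rfl
  set σ : Equiv.Perm (Fin n) := Equiv.addRight c with hσdef
  have hσ : ∀ i : Fin n, σ i = i + c := fun i => rfl
  have hvadd : ∀ i : Fin n, ((σ i : Fin n) : ℕ) = ((i : ℕ) + (c : ℕ)) % n :=
    fun i => Fin.val_add i c
  have HsymM : ∀ i j, (A.submatrix σ σ) i j = (A.submatrix σ σ) j i := fun i j => Hsym _ _
  have HtriM : ∀ i j : Fin n, (i : ℕ) + 1 < (j : ℕ) → (A.submatrix σ σ) i j = 0 := by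
    intro i j hij
    by_cases hcorner : (i : ℕ) = 0 ∧ (j : ℕ) = n - 1
    · have e1 : σ i = ⟨m0 + 1, hm0n⟩ := by
        apply Fin.ext
        rw [hvadd]
        have hx : (i : ℕ) + (c : ℕ) = m0 + 1 := by omega
        rw [hx, Nat.mod_eq_of_lt hm0n]
      have e2 : σ j = ⟨m0, Nat.lt_of_succ_lt hm0n⟩ := by
        apply Fin.ext
        rw [hvadd]
        have hx : (j : ℕ) + (c : ℕ) = n + m0 := by omega
        rw [hx]
        show (n + m0) % n = m0
        rcases modchar (n + m0) (by omega) with ⟨h, hl⟩ | ⟨h, _⟩ <;> omega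
      show A (σ i) (σ j) = 0
      rw [e1, e2, Hsym]
      exact hA0
    · show A (σ i) (σ j) = 0
      apply hband
      · have hxi := modchar ((i : ℕ) + (c : ℕ)) (by have := i.isLt; omega)
        have hxj := modchar ((j : ℕ) + (c : ℕ)) (by have := j.isLt; omega)
        have hi' := hvadd i
        have hj' := hvadd j
        have hiI : ((σ i : Fin n) : ℤ) = (((σ i : Fin n) : ℕ) : ℤ) := rfl
        have hjI : ((σ j : Fin n) : ℤ) = (((σ j : Fin n) : ℕ) : ℤ) := rfl
        rw [hiI, hjI]
        have := i.isLt
        have := j.isLt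
        omega
      · have hxi := modchar ((i : ℕ) + (c : ℕ)) (by have := i.isLt; omega)
        have hxj := modchar ((j : ℕ) + (c : ℕ)) (by have := j.isLt; omega)
        have hi' := hvadd i
        have hj' := hvadd j
        have hiI : ((σ i : Fin n) : ℤ) = (((σ i : Fin n) : ℕ) : ℤ) := rfl
        have hjI : ((σ j : Fin n) : ℤ) = (((σ j : Fin n) : ℕ) : ℤ) := rfl
        rw [hiI, hjI]
        have := i.isLt
        have := j.isLt
        omega
  have hrankM : (A.submatrix σ σ).rank = r := by
    rw [Matrix.rank_submatrix]
    exact hrank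
  have hBlk : (Blk (A.submatrix σ σ) 0 n).rank = r := by
    let E : {i : Fin n // 0 ≤ (i : ℕ) ∧ (i : ℕ) < n} ≃ Fin n :=
      { toFun := fun x => (x : Fin n)
        invFun := fun i => ⟨i, Nat.zero_le _, i.isLt⟩
        left_inv := fun x => rfl
        right_inv := fun i => rfl }
    have : Blk (A.submatrix σ σ) 0 n = (A.submatrix σ σ).submatrix ⇑E ⇑E := rfl
    rw [this, Matrix.rank_submatrix]
    exact hrankM
  obtain ⟨z, hmono, h0, hlast, hb, hrk⟩ :=
    build_blocks (A.submatrix σ σ) HsymM HtriM n 0 r (by omega) hBlk (by omega)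
  refine ⟨σ, ⟨c, Or.inl fun i => rfl⟩, z, hmono, h0, hlast, ?_, fun j => hrk j⟩
  intro j
  have hzle : z j.succ ≤ n :=
    le_trans (hmono.monotone (Fin.le_last _)) (le_of_eq hlast)
  have hzpos : 0 < z j.succ := by
    have : z 0 < z j.succ := hmono (by
      rw [Fin.lt_def]
      simp [Fin.val_succ])
    omega
  rcases lt_or_eq_of_le hzle with hlt | heq
  · have h1 : (z j.succ - 1) % n = z j.succ - 1 := Nat.mod_eq_of_lt (by omega)
    have h2 : z j.succ % n = z j.succ := Nat.mod_eq_of_lt hlt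
    exact (congrArg₂ (A.submatrix σ σ) (Fin.ext h1) (Fin.ext h2)).trans (hb j hlt)
  · -- wrap-around boundary: uses the zero coupling at the cut
    have h1 : (z j.succ - 1) % n = n - 1 := by rw [heq]; exact Nat.mod_eq_of_lt (by omega)
    have h2 : z j.succ % n = 0 := by rw [heq]; exact Nat.mod_self n
    have e1 : σ (⟨(z j.succ - 1) % n, Nat.mod_lt _ hn0⟩ : Fin n)
        = ⟨m0, Nat.lt_of_succ_lt hm0n⟩ := by
      apply Fin.ext
      rw [hvadd]
      have hx : ((⟨(z j.succ - 1) % n, Nat.mod_lt _ hn0⟩ : Fin n) : ℕ) + (c : ℕ) = n + m0 := by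
        show (z j.succ - 1) % n + (c : ℕ) = n + m0
        omega
      rw [hx]
      show (n + m0) % n = m0
      rcases modchar (n + m0) (by omega) with ⟨h, hl⟩ | ⟨h, _⟩ <;> omega
    have e2 : σ (⟨z j.succ % n, Nat.mod_lt _ hn0⟩ : Fin n) = ⟨m0 + 1, hm0n⟩ := by
      apply Fin.ext
      rw [hvadd]
      have hx : ((⟨z j.succ % n, Nat.mod_lt _ hn0⟩ : Fin n) : ℕ) + (c : ℕ) = m0 + 1 := by
        show z j.succ % n + (c : ℕ) = m0 + 1
        omega
      rw [hx, Nat.mod_eq_of_lt hm0n]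
    show A (σ _) (σ _) = 0
    rw [e1, e2]
    exact hA0
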